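/- The extended map Z from pairs (phylogeny, tip-partition) to transmission trees on A is not injective when some host in the transmission tree has at least two children: two different orderings of the children in the caterpillar construction yield distinct partitioned phylogenies with the same image transmission tree. -/

import Mathlib

/-- A rooted binary phylogenetic tree on node set `V` with tips labelled bijectively
by the host set `A`.  `parent v = none` iff `v` is the root; `depth` witnesses
acyclicity; every tip is childless and every internal (non-tip) node has exactly
two children. -/
structure PhyloTree (V A : Type) where
  parent : V → Option V
  root : V
  depth : V → ℕ
  parent_root : parent root = none
  root_unique : ∀ v, parent v = none → v = root
  depth_lt : ∀ u v, parent u = some v → depth v < depth u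
  tip : A → V
  tip_inj : Function.Injective tip
  tip_no_child : ∀ (a : A) (u : V), parent u ≠ some (tip a)
  binary : ∀ v : V, (¬ ∃ a, tip a = v) → {u : V | parent u = some v}.ncard = 2

/-- `T.anc u v` : `u` is an ancestor of `v` in `T` (following parents from `v`
reaches `u`; reflexive). -/
def PhyloTree.anc {V A : Type} (T : PhyloTree V A) (u v : V) : Prop :=
  Relation.ReflTransGen (fun x y => T.parent x = some y) v u

/-- A tip-partition of `T`: each node gets a label `δ`, the block of a label is
its fiber, each block is a connected subtree (witnessed by its root `blockRoot`,
an ancestor of every node of the block such that every node on the tree path from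
it to a block member is in the block), and the block of label `a` contains the
tip labelled `a` (hence exactly one tip, by `δ_tip`). -/
structure TipPartition {V A : Type} (T : PhyloTree V A) where
  δ : V → A
  δ_tip : ∀ a, δ (T.tip a) = a
  blockRoot : A → V
  blockRoot_label : ∀ a, δ (blockRoot a) = a
  blockRoot_anc : ∀ u, T.anc (blockRoot (δ u)) u
  block_connected : ∀ u w, T.anc (blockRoot (δ u)) w → T.anc w u → δ w = δ u

/-- The transmission (infector) map `z(P)` induced by a tip-partition: the
infector of host `a` is the label of the block containing the parent of the root
of `a`'s block, or `none` if that root is the root of `T`. -/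
def infector {V A : Type} (T : PhyloTree V A) (P : TipPartition T) (a : A) : Option A :=
  (T.parent (P.blockRoot a)).map P.δ

/-- `f` is a transmission tree (a rooted labelled tree on `A`, viewed as an
infector map): there is a unique root (host with no infector), and iterating the
infector map from any host reaches the root (equivalently `none`). -/
def IsTransmissionTree {A : Type} (f : A → Option A) : Prop :=
  (∃! r, f r = none) ∧ ∀ a, ∃ k, (fun o => Option.bind o f)^[k] (some a) = none

/-!
Rank the hosts and expand the transmission tree into a caterpillar: the block of a host `x` is a
path made of one internal node per child `c` of `x`, in increasing rank, ending at the tip `x`,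
and the block of `c` hangs from the node of `c`. This partitioned phylogeny maps to `f` whatever
the ranking. The sibling of the tip `a` is the root of the block of the last child of `a`, so its
label is that child; an isomorphism of labelled partitioned trees fixes the tip `a` and preserves
parents and labels, hence this label. Two rankings whose last children of `a` differ therefore
give non-isomorphic preimages.
-/

open Function

namespace IsTransmissionTree

variable {A : Type} {f : A → Option A}

noncomputable def root (hf : IsTransmissionTree f) : A := hf.1.exists.choose

theorem eq_none_iff (hf : IsTransmissionTree f) {x : A} : f x = none ↔ x = hf.root :=
  ⟨fun hx => hf.1.unique hx hf.1.exists.choose_spec, fun hx => hx ▸ hf.1.exists.choose_spec⟩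

open Classical in
noncomputable def level (hf : IsTransmissionTree f) (x : A) : ℕ := Nat.find (hf.2 x)

theorem level_lt (hf : IsTransmissionTree f) {x y : A} (h : f x = some y) :
    hf.level y < hf.level x := by
  have hspec := Nat.find_spec (hf.2 x)
  obtain ⟨k, hk⟩ : ∃ k, Nat.find (hf.2 x) = k + 1 :=
    Nat.exists_eq_succ_of_ne_zero fun h0 => by simp [h0] at hspec
  rw [hk, Function.iterate_succ_apply] at hspec
  simp only [Option.bind_some, h] at hspec
  unfold level
  rw [hk]
  exact Nat.lt_succ_of_le (Nat.find_le hspec)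

theorem ne_of_eq_some (hf : IsTransmissionTree f) {x y : A} (h : f x = some y) : x ≠ y :=
  fun hxy => (hf.level_lt h).ne (by rw [hxy])

end IsTransmissionTree

namespace PhyloTree

variable {V A : Type} (T : PhyloTree V A)

theorem depth_le_of_anc {u v : V} (h : T.anc u v) : T.depth u ≤ T.depth v := by
  induction h with
  | refl => exact le_rfl
  | tail _ hstep ih => exact (T.depth_lt _ _ hstep).le.trans ih

theorem anc_antisymm {u v : V} (huv : T.anc u v) (hvu : T.anc v u) : u = v := by
  rcases Relation.ReflTransGen.cases_head huv with rfl | ⟨w, hvw, hwu⟩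
  · rfl
  · exact absurd (T.depth_lt _ _ hvw)
      (not_lt.mpr ((T.depth_le_of_anc hvu).trans (T.depth_le_of_anc hwu)))

variable {T} {δ : V → A} {br : A → V}

theorem anc_blockRoot_of_parent_in_block
    (hup : ∀ u, u ≠ br (δ u) → ∃ p, T.parent u = some p ∧ δ p = δ u) (u : V) :
    T.anc (br (δ u)) u := by
  induction hn : T.depth u using Nat.strong_induction_on generalizing u with
  | _ n ih =>
  by_cases hu : u = br (δ u)
  · rw [← hu]
    exact .refl
  · obtain ⟨p, hp, hδp⟩ := hup u hu
    have hbp := ih _ (hn ▸ T.depth_lt u p hp) p rfl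
    rw [hδp] at hbp
    exact .head hp hbp

theorem label_eq_of_parent_in_block
    (hup : ∀ u, u ≠ br (δ u) → ∃ p, T.parent u = some p ∧ δ p = δ u) {u w : V}
    (hbw : T.anc (br (δ u)) w) (hwu : T.anc w u) : δ w = δ u := by
  induction hn : T.depth u using Nat.strong_induction_on generalizing u with
  | _ n ih =>
  by_cases hu : u = br (δ u)
  · rw [← hu] at hbw
    rw [T.anc_antisymm hwu hbw]
  · obtain ⟨p, hp, hδp⟩ := hup u hu
    rcases Relation.ReflTransGen.cases_head hwu with rfl | ⟨q, huq, hqw⟩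
    · rfl
    · obtain rfl : q = p := Option.some_injective _ (huq.symm.trans hp)
      rw [← hδp] at hbw ⊢
      exact ih _ (hn ▸ T.depth_lt u q huq) hbw hqw rfl

end PhyloTree

def TipPartition.ofParentInBlock {V A : Type} {T : PhyloTree V A} (δ : V → A)
    (δ_tip : ∀ a, δ (T.tip a) = a) (br : A → V) (br_label : ∀ a, δ (br a) = a)
    (hup : ∀ u, u ≠ br (δ u) → ∃ p, T.parent u = some p ∧ δ p = δ u) :
    TipPartition T where
  δ := δ
  δ_tip := δ_tip
  blockRoot := br
  blockRoot_label := br_label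
  blockRoot_anc := PhyloTree.anc_blockRoot_of_parent_in_block hup
  block_connected _ _ := PhyloTree.label_eq_of_parent_in_block hup

section BlockParent

variable {V A : Type} (ℓ : V → A) (κ : V → ℕ)

def IsBlockPred (w v : V) : Prop :=
  ℓ w = ℓ v ∧ κ w < κ v ∧ ∀ u, ℓ u = ℓ v → κ u < κ v → κ u ≤ κ w

def IsBlockMin (v : V) : Prop :=
  ∀ u, ℓ u = ℓ v → κ v ≤ κ u

open Classical in
/-- The fibres of `ℓ` are the blocks, each ordered by `κ`: a vertex hangs from its predecessor
in its block, and the first vertex of the block `x` from `edge x`. -/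
noncomputable def blockParent (edge : A → Option V) (v : V) : Option V :=
  if h : ∃ w, IsBlockPred ℓ κ w v then some h.choose else edge (ℓ v)

variable {ℓ κ}

theorem IsBlockPred.unique_left (hinj : Injective fun v => (ℓ v, κ v)) {w w' v : V}
    (h : IsBlockPred ℓ κ w v) (h' : IsBlockPred ℓ κ w' v) : w = w' :=
  hinj (Prod.ext (h.1.trans h'.1.symm)
    (le_antisymm (h'.2.2 w h.1 h.2.1) (h.2.2 w' h'.1 h'.2.1)))

theorem IsBlockPred.unique_right (hinj : Injective fun v => (ℓ v, κ v)) {w v v' : V}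
    (h : IsBlockPred ℓ κ w v) (h' : IsBlockPred ℓ κ w v') : v = v' := by
  have hℓ : ℓ v = ℓ v' := h.1.symm.trans h'.1
  refine hinj (Prod.ext hℓ ?_)
  rcases lt_trichotomy (κ v) (κ v') with hlt | heq | hgt
  · exact absurd (h'.2.2 v hℓ hlt) (not_le.mpr h.2.1)
  · exact heq
  · exact absurd (h.2.2 v' hℓ.symm hgt) (not_le.mpr h'.2.1)

theorem IsBlockMin.unique (hinj : Injective fun v => (ℓ v, κ v)) {v v' : V}
    (h : IsBlockMin ℓ κ v) (h' : IsBlockMin ℓ κ v') (hℓ : ℓ v = ℓ v') : v = v' :=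
  hinj (Prod.ext hℓ (le_antisymm (h v' hℓ.symm) (h' v hℓ)))

theorem IsBlockMin.not_isBlockPred {w v : V} (h : IsBlockMin ℓ κ v) :
    ¬ IsBlockPred ℓ κ w v :=
  fun hw => absurd hw.2.1 (not_lt.mpr (h w hw.1))

section Finite

variable [Finite V]

theorem exists_isBlockMin (v : V) : ∃ w, ℓ w = ℓ v ∧ IsBlockMin ℓ κ w := by
  obtain ⟨w, hw, hmin⟩ :=
    Set.exists_min_image {u | ℓ u = ℓ v} κ (Set.toFinite _) ⟨v, rfl⟩
  exact ⟨w, hw, fun u hu => hmin u (hu.trans hw)⟩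

theorem isBlockMin_or_exists_isBlockPred (v : V) :
    IsBlockMin ℓ κ v ∨ ∃ w, IsBlockPred ℓ κ w v := by
  refine or_iff_not_imp_left.mpr fun hv => ?_
  obtain ⟨u, hu, hlt⟩ : ∃ u, ℓ u = ℓ v ∧ κ u < κ v := by
    simpa [IsBlockMin] using hv
  obtain ⟨w, ⟨hwℓ, hwκ⟩, hmax⟩ :=
    Set.exists_max_image {u | ℓ u = ℓ v ∧ κ u < κ v} κ (Set.toFinite _) ⟨u, hu, hlt⟩
  exact ⟨w, hwℓ, hwκ, fun u hu hlt => hmax u ⟨hu, hlt⟩⟩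

theorem exists_isBlockPred_of_lt {w u : V} (hu : ℓ u = ℓ w) (hlt : κ w < κ u) :
    ∃ v, IsBlockPred ℓ κ w v := by
  obtain ⟨v, ⟨hvℓ, hvκ⟩, hmin⟩ :=
    Set.exists_min_image {u | ℓ u = ℓ w ∧ κ w < κ u} κ (Set.toFinite _) ⟨u, hu, hlt⟩
  refine ⟨v, hvℓ.symm, hvκ, fun x hx hxv => ?_⟩
  by_contra! hwx
  exact absurd hxv (not_lt.mpr (hmin x ⟨hx.trans hvℓ, hwx⟩))

end Finite

variable {edge : A → Option V}

theorem blockParent_of_isBlockMin {v : V} (h : IsBlockMin ℓ κ v) :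
    blockParent ℓ κ edge v = edge (ℓ v) := by
  rw [blockParent, dif_neg fun ⟨_, hw⟩ => h.not_isBlockPred hw]

theorem blockParent_of_isBlockPred (hinj : Injective fun v => (ℓ v, κ v)) {w v : V}
    (h : IsBlockPred ℓ κ w v) : blockParent ℓ κ edge v = some w := by
  have hex : ∃ w, IsBlockPred ℓ κ w v := ⟨w, h⟩
  rw [blockParent, dif_pos hex, hex.choose_spec.unique_left hinj h]

variable [Finite V]

theorem blockParent_eq_some_iff (hinj : Injective fun v => (ℓ v, κ v)) {v w : V} :
    blockParent ℓ κ edge v = some w ↔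
      IsBlockPred ℓ κ w v ∨ IsBlockMin ℓ κ v ∧ edge (ℓ v) = some w := by
  rcases isBlockMin_or_exists_isBlockPred v with hv | ⟨w', hw'⟩
  · rw [blockParent_of_isBlockMin hv]
    exact ⟨fun h => .inr ⟨hv, h⟩, fun h => h.elim (absurd · hv.not_isBlockPred) And.right⟩
  · rw [blockParent_of_isBlockPred hinj hw', Option.some_inj]
    refine ⟨fun h => .inl (h ▸ hw'), ?_⟩
    rintro (h | ⟨hv, -⟩)
    · exact hw'.unique_left hinj h
    · exact absurd hw' hv.not_isBlockPred

theorem blockParent_eq_none_iff {v : V} :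
    blockParent ℓ κ edge v = none ↔ IsBlockMin ℓ κ v ∧ edge (ℓ v) = none := by
  rcases isBlockMin_or_exists_isBlockPred v with hv | ⟨w, hw⟩
  · rw [blockParent_of_isBlockMin hv]
    exact ⟨fun h => ⟨hv, h⟩, And.right⟩
  · rw [blockParent, dif_pos ⟨w, hw⟩]
    exact ⟨nofun, fun h => absurd hw h.1.not_isBlockPred⟩

end BlockParent

namespace Caterpillar

/-- Tips are `inl x`. The internal node `inr ⟨(c, x), _⟩` is the transmission from `x` to `c`:
it lies in the block of `x`, where it is ranked by `c` (the tip `x` coming last), and the root of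
the block of `c` hangs from it. -/
abbrev Node {A : Type} (f : A → Option A) : Type :=
  A ⊕ {p : A × A // f p.1 = some p.2}

variable {A : Type} {f : A → Option A}

def Node.label : Node f → A
  | .inl x => x
  | .inr p => p.1.2

def Node.key {N : ℕ} (ι : A ↪ Fin N) : Node f → ℕ
  | .inl _ => N
  | .inr p => ι p.1.1

def edge (f : A → Option A) (x : A) : Option (Node f) :=
  match h : f x with
  | none => none
  | some y => some (.inr ⟨(x, y), h⟩)

theorem edge_of_eq_some {x y : A} (h : f x = some y) : edge f x = some (.inr ⟨(x, y), h⟩) := by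
  unfold edge
  split
  · simp_all
  · next y' hy' =>
    obtain rfl := Option.some_inj.mp (hy'.symm.trans h)
    rfl

theorem edge_of_eq_none {x : A} (h : f x = none) : edge f x = none := by
  unfold edge
  split <;> simp_all

theorem exists_of_edge_eq_some {x : A} {v : Node f} (h : edge f x = some v) :
    ∃ y, ∃ hy : f x = some y, v = .inr ⟨(x, y), hy⟩ := by
  unfold edge at h
  split at h
  · cases h
  · next y hy => exact ⟨y, hy, (Option.some_inj.mp h).symm⟩

theorem eq_of_edge_eq_some {x : A} {p : {p : A × A // f p.1 = some p.2}}
    (h : edge f x = some (.inr p)) : x = p.1.1 := by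
  obtain ⟨y, hy, hp⟩ := exists_of_edge_eq_some h
  rw [Sum.inr.inj_iff] at hp
  rw [hp]

theorem edge_eq_none_iff {x : A} : edge f x = none ↔ f x = none := by
  cases hx : f x with
  | none => simp [edge_of_eq_none hx]
  | some y => simp [edge_of_eq_some hx]

theorem map_label_edge (x : A) : (edge f x).map Node.label = f x := by
  cases hx : f x with
  | none => simp [edge_of_eq_none hx]
  | some y => simp [edge_of_eq_some hx, Node.label]

variable {N : ℕ} (ι : A ↪ Fin N)

theorem Node.key_le (v : Node f) : v.key ι ≤ N := by
  cases v with
  | inl x => exact le_rfl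
  | inr p => exact (ι p.1.1).isLt.le

theorem label_key_injective : Injective fun v : Node f => (v.label, v.key ι) := by
  rintro (x | ⟨⟨c, x⟩, hc⟩) (y | ⟨⟨d, y⟩, hd⟩) h <;>
    simp only [Node.label, Node.key, Prod.mk.injEq] at h
  · rw [h.1]
  · exact absurd h.2 (ι d).isLt.ne'
  · exact absurd h.2 (ι c).isLt.ne
  · obtain ⟨rfl, hcd⟩ := h
    obtain rfl := ι.injective (Fin.val_injective hcd)
    rfl

theorem isBlockPred_tip {a c : A} (hc : f c = some a)
    (hmax : ∀ d, f d = some a → ι d ≤ ι c) :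
    IsBlockPred Node.label (Node.key ι) (.inr ⟨(c, a), hc⟩ : Node f) (.inl a) := by
  refine ⟨rfl, (ι c).isLt, ?_⟩
  rintro (y | ⟨⟨d, y⟩, hd⟩) hu hlt
  · exact absurd hlt (lt_irrefl N)
  · obtain rfl : y = a := hu
    exact hmax d hd

noncomputable def parent : Node f → Option (Node f) :=
  blockParent Node.label (Node.key ι) (edge f)

theorem parent_tip {a c : A} (hc : f c = some a) (hmax : ∀ d, f d = some a → ι d ≤ ι c) :
    parent ι (.inl a : Node f) = some (.inr ⟨(c, a), hc⟩) :=
  blockParent_of_isBlockPred (label_key_injective ι) (isBlockPred_tip ι hc hmax)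

variable [Finite A]

noncomputable def blockRoot (x : A) : Node f :=
  (exists_isBlockMin (ℓ := Node.label) (κ := Node.key ι) (.inl x)).choose

theorem label_blockRoot (x : A) : (blockRoot ι x : Node f).label = x :=
  (exists_isBlockMin _).choose_spec.1

theorem isBlockMin_blockRoot (x : A) :
    IsBlockMin Node.label (Node.key ι) (blockRoot ι x : Node f) :=
  (exists_isBlockMin _).choose_spec.2

theorem eq_blockRoot_of_isBlockMin {v : Node f} (h : IsBlockMin Node.label (Node.key ι) v) :
    v = blockRoot ι v.label :=
  h.unique (label_key_injective ι) (isBlockMin_blockRoot ι _) (label_blockRoot ι _).symm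

theorem parent_blockRoot (x : A) : parent ι (blockRoot ι x : Node f) = edge f x := by
  rw [parent, blockParent_of_isBlockMin (isBlockMin_blockRoot ι x), label_blockRoot]

theorem parent_eq_some_iff {u v : Node f} :
    parent ι u = some v ↔
      IsBlockPred Node.label (Node.key ι) v u ∨
        IsBlockMin Node.label (Node.key ι) u ∧ edge f u.label = some v :=
  blockParent_eq_some_iff (label_key_injective ι)

theorem parent_ne_inl (u : Node f) (x : A) : parent ι u ≠ some (.inl x) := by
  rw [Ne, parent_eq_some_iff]
  rintro (⟨-, hlt, -⟩ | ⟨-, he⟩)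
  · exact absurd hlt (not_lt.mpr (u.key_le ι))
  · obtain ⟨y, hy, h⟩ := exists_of_edge_eq_some he
    cases h

theorem exists_parent_label_eq {u : Node f} (hu : u ≠ blockRoot ι u.label) :
    ∃ p, parent ι u = some p ∧ p.label = u.label := by
  rcases isBlockMin_or_exists_isBlockPred u with hmin | ⟨w, hw⟩
  · exact absurd (eq_blockRoot_of_isBlockMin ι hmin) hu
  · exact ⟨w, blockParent_of_isBlockPred (label_key_injective ι) hw, hw.1⟩

theorem ncard_children (hf : IsTransmissionTree f) (p : {p : A × A // f p.1 = some p.2}) :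
    {u | parent ι u = some (.inr p)}.ncard = 2 := by
  obtain ⟨⟨c, x⟩, hc⟩ := p
  obtain ⟨s, hs⟩ := exists_isBlockPred_of_lt (ℓ := Node.label) (κ := Node.key ι)
    (w := (.inr ⟨(c, x), hc⟩ : Node f)) (u := .inl x) rfl (ι c).isLt
  have hchildren : {u | parent ι u = some (.inr ⟨(c, x), hc⟩)} = {s, blockRoot ι c} := by
    ext u
    simp only [Set.mem_ofPred_eq, Set.mem_insert_iff, Set.mem_singleton_iff, parent_eq_some_iff]
    constructor
    · rintro (hu | ⟨hmin, he⟩)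
      · exact .inl (hu.unique_right (label_key_injective ι) hs)
      · rw [eq_blockRoot_of_isBlockMin ι hmin, eq_of_edge_eq_some he]
        exact .inr rfl
    · rintro (rfl | rfl)
      · exact .inl hs
      · exact .inr ⟨isBlockMin_blockRoot ι c, by rw [label_blockRoot, edge_of_eq_some hc]⟩
  rw [hchildren, Set.ncard_pair]
  intro h
  have hsx : s.label = x := hs.1.symm
  exact hf.ne_of_eq_some hc (by rw [← label_blockRoot ι c, ← h, hsx])

theorem parent_blockRoot_eq_parent_tip {a c : A} (hc : f c = some a)
    (hmax : ∀ d, f d = some a → ι d ≤ ι c) :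
    parent ι (blockRoot ι c : Node f) = parent ι (.inl a) := by
  rw [parent_blockRoot, edge_of_eq_some hc, parent_tip ι hc hmax]

theorem label_eq_of_parent_eq_parent_tip {a c : A} (hc : f c = some a)
    (hmax : ∀ d, f d = some a → ι d ≤ ι c) {u : Node f}
    (h : parent ι u = parent ι (.inl a)) (hne : u ≠ .inl a) : u.label = c := by
  rw [parent_tip ι hc hmax, parent_eq_some_iff] at h
  rcases h with hu | ⟨-, he⟩
  · exact absurd (hu.unique_right (label_key_injective ι) (isBlockPred_tip ι hc hmax)) hne
  · exact eq_of_edge_eq_some he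

variable (hf : IsTransmissionTree f)

theorem eq_blockRoot_root_of_parent_eq_none {v : Node f} (h : parent ι v = none) :
    v = blockRoot ι hf.root := by
  obtain ⟨hmin, he⟩ := blockParent_eq_none_iff.mp h
  rw [eq_blockRoot_of_isBlockMin ι hmin, ← hf.eq_none_iff.mp (edge_eq_none_iff.mp he)]

theorem depth_lt {u v : Node f} (h : parent ι u = some v) :
    (N + 1) * hf.level v.label + v.key ι < (N + 1) * hf.level u.label + u.key ι := by
  rcases (parent_eq_some_iff ι).mp h with ⟨hℓ, hκ, -⟩ | ⟨-, he⟩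
  · rw [hℓ]
    exact Nat.add_lt_add_left hκ _
  · obtain ⟨y, hy, rfl⟩ := exists_of_edge_eq_some he
    have hι : ι u.label < N := (ι u.label).isLt
    calc (N + 1) * hf.level y + ι u.label < (N + 1) * (hf.level y + 1) := by
          rw [mul_add_one]; omega
      _ ≤ (N + 1) * hf.level u.label := Nat.mul_le_mul_left _ (hf.level_lt hy)
      _ ≤ (N + 1) * hf.level u.label + u.key ι := Nat.le_add_right _ _

noncomputable def tree : PhyloTree (Node f) A where
  parent := parent ι
  root := blockRoot ι hf.root
  depth v := (N + 1) * hf.level v.label + v.key ι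
  parent_root := by
    rw [parent_blockRoot]
    exact edge_of_eq_none (hf.eq_none_iff.mpr rfl)
  root_unique _ := eq_blockRoot_root_of_parent_eq_none ι hf
  depth_lt _ _ := depth_lt ι hf
  tip := .inl
  tip_inj := Sum.inl_injective
  tip_no_child a u := parent_ne_inl ι u a
  binary
    | .inl x, h => absurd ⟨x, rfl⟩ h
    | .inr p, _ => ncard_children ι hf p

noncomputable def partition : TipPartition (tree ι hf) :=
  .ofParentInBlock Node.label (fun _ => rfl) (blockRoot ι) (label_blockRoot ι)
    fun _ => exists_parent_label_eq ι

theorem infector_partition : infector (tree ι hf) (partition ι hf) = f :=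
  funext fun x => (congrArg _ (parent_blockRoot ι x)).trans (map_label_edge x)

end Caterpillar

theorem exists_embedding_fin_le {A : Type} [Finite A] (c : A) :
    ∃ (N : ℕ) (ι : A ↪ Fin N), ∀ b, ι b ≤ ι c := by
  classical
  obtain ⟨N, ⟨e⟩⟩ := Finite.exists_equiv_fin A
  have hN : 0 < N := (e c).pos
  refine ⟨N, ((Equiv.swap c (e.symm ⟨N - 1, by omega⟩)).trans e).toEmbedding, fun b => ?_⟩
  simp only [Equiv.coe_toEmbedding, Equiv.trans_apply, Equiv.swap_apply_left,
    Equiv.apply_symm_apply, Fin.le_def]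
  have := (e (Equiv.swap c (e.symm ⟨N - 1, by omega⟩) b)).isLt
  omega

open Caterpillar in
/-- `Z` is not injective when some host of the transmission tree `f` has at
least two children: there are two partitioned phylogenies, non-isomorphic as
labelled partitioned trees, that both map to `f` under `Z`. -/
theorem Z_not_injective {A : Type} [Fintype A] (f : A → Option A)
    (hf : IsTransmissionTree f) (a : A)
    (ha : 2 ≤ {b : A | f b = some a}.ncard) :
    ∃ (V : Type) (T T' : PhyloTree V A) (P : TipPartition T) (P' : TipPartition T'),
      infector T P = f ∧ infector T' P' = f ∧
      ¬ ∃ φ : V ≃ V,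
          (∀ v : V, T'.parent (φ v) = (T.parent v).map φ) ∧
          φ T.root = T'.root ∧
          (∀ b : A, φ (T.tip b) = T'.tip b) ∧
          (∀ v : V, P'.δ (φ v) = P.δ v) := by
  obtain ⟨c₁, c₂, hc₁, hc₂, hc₁₂⟩ := (Set.one_lt_ncard_iff (Set.toFinite _)).mp ha
  obtain ⟨N₁, ι₁, hι₁⟩ := exists_embedding_fin_le c₁
  obtain ⟨N₂, ι₂, hι₂⟩ := exists_embedding_fin_le c₂
  refine ⟨Node f, tree ι₁ hf, tree ι₂ hf, partition ι₁ hf, partition ι₂ hf,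
    infector_partition ι₁ hf, infector_partition ι₂ hf, ?_⟩
  rintro ⟨φ, hφ, -, hφtip, hφlabel⟩
  set u : Node f := blockRoot ι₁ c₁
  have hu : parent ι₁ u = parent ι₁ (.inl a) :=
    parent_blockRoot_eq_parent_tip ι₁ hc₁ fun d _ => hι₁ d
  have hua : u ≠ .inl a := fun h =>
    hf.ne_of_eq_some hc₁ ((label_blockRoot ι₁ c₁).symm.trans (congrArg Node.label h))
  have hφa : φ (.inl a) = .inl a := hφtip a
  have hφu : parent ι₂ (φ u) = parent ι₂ (.inl a) := by
    rw [← hφa]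
    exact (hφ u).trans ((congrArg (Option.map φ) hu).trans (hφ _).symm)
  have hlabel := label_eq_of_parent_eq_parent_tip ι₂ hc₂ (fun d _ => hι₂ d) hφu
    (hφa ▸ φ.injective.ne hua)
  exact hc₁₂ ((label_blockRoot ι₁ c₁).symm.trans ((hφlabel u).symm.trans hlabel))
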